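/- Let d_S ≥ 2, let ρ_{SE} be a density matrix on ℂ^{d_S} ⊗ ℂ^{d_E} with reduced state ρ_S = Tr_E ρ_{SE}, and set χ = ‖ρ_S − I_S/d_S‖₁. If χ ≤ 1/d_S, then for every Hermitian matrix H on ℂ^{d_S} ⊗ ℂ^{d_E} the purity rate is bounded by |Tr(H·[ρ_S ⊗ I_E, ρ_{SE}])| ≤ ‖H‖_∞·χ. -/

import Mathlib

/-!
Write `Δ = ρ_S - I/d_S`. Since `ρ_S ⊗ I` and `Δ ⊗ I` differ by a scalar, the commutator equals
`[Δ ⊗ I, ρ_SE]`, and cyclicity of the trace turns the rate into `Tr([H, Δ ⊗ I] ρ_SE)`, which for a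
state is at most `‖[H, Δ ⊗ I]‖ ≤ 2‖H‖‖Δ‖`. As `Δ` is Hermitian and traceless, its positive and
negative eigenvalues each sum to `χ/2`, so `‖Δ‖ ≤ χ/2`.
-/

open scoped Kronecker ComplexOrder
open Matrix MeasureTheory

noncomputable section

/-- The trace norm `‖A‖₁ = Tr √(AᴴA)`. -/
def traceNorm {n : Type*} [Fintype n] [DecidableEq n] (A : Matrix n n ℂ) : ℝ :=
  (((Matrix.posSemidef_conjTranspose_mul_self A).1.eigenvectorUnitary.1 *
    diagonal (((↑) : ℝ → ℂ) ∘ (√·) ∘ (Matrix.posSemidef_conjTranspose_mul_self A).1.eigenvalues) *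
    (star (Matrix.posSemidef_conjTranspose_mul_self A).1.eigenvectorUnitary : Matrix n n ℂ)).trace).re

/-- The operator (spectral) norm `‖A‖_∞`. -/
def opNorm {n : Type*} [Fintype n] [DecidableEq n] (A : Matrix n n ℂ) : ℝ :=
  ‖Matrix.toEuclideanCLM (𝕜 := ℂ) A‖

/-- The partial trace over the second tensor factor. -/
def ptrace2 {m e : Type*} [Fintype e] (ρ : Matrix (m × e) (m × e) ℂ) : Matrix m m ℂ :=
  Matrix.of fun i j => ∑ k, ρ (i, k) (j, k)

/-- The binary logarithm `log₂` of a Hermitian matrix, via the spectral functional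
calculus (junk value `0` on non-Hermitian input). -/
def matLog2 {n : Type*} [Fintype n] [DecidableEq n] (A : Matrix n n ℂ) : Matrix n n ℂ :=
  if hA : A.IsHermitian then hA.cfc (Real.logb 2) else 0

/-- The commutator `[A, B] = A·B − B·A`. -/
def mcomm {n : Type*} [Fintype n] (A B : Matrix n n ℂ) : Matrix n n ℂ :=
  A * B - B * A

open scoped Matrix.Norms.L2Operator

lemma abs_le_half_sum_abs_of_sum_eq_zero {ι : Type*} [Fintype ι] [DecidableEq ι] (f : ι → ℝ)
    (hf : ∑ j, f j = 0) (i : ι) : |f i| ≤ (∑ j, |f j|) / 2 := by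
  have hsplit := Finset.add_sum_erase Finset.univ f (Finset.mem_univ i)
  have hsplit_abs := Finset.add_sum_erase Finset.univ (|f ·|) (Finset.mem_univ i)
  have hrest := Finset.abs_sum_le_sum_abs f (Finset.univ.erase i)
  rw [show ∑ j ∈ Finset.univ.erase i, f j = -f i by linarith, abs_neg] at hrest
  linarith

lemma CStarRing.norm_coe_unitary_mul_mul_star {E : Type*} [NormedRing E] [StarRing E]
    [CStarRing E] (U : unitary E) (A : E) : ‖(U : E) * A * star (U : E)‖ = ‖A‖ := by
  rw [← Unitary.coe_star, norm_mul_coe_unitary, norm_coe_unitary_mul]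

namespace Matrix

variable {n : Type*} [Fintype n] [DecidableEq n]

lemma opNorm_eq_l2_opNorm (A : Matrix n n ℂ) : opNorm A = ‖A‖ := rfl

lemma norm_diag_le_l2_opNorm {𝕜 : Type*} [RCLike 𝕜] (A : Matrix n n 𝕜) (i : n) :
    ‖A i i‖ ≤ ‖A‖ := by
  set v := EuclideanSpace.single i (1 : 𝕜)
  calc ‖A i i‖ = ‖inner 𝕜 v (toEuclideanCLM (𝕜 := 𝕜) A v)‖ := by
        simp [v, EuclideanSpace.inner_single_left, ofLp_toEuclideanCLM]
    _ ≤ ‖v‖ * (‖A‖ * ‖v‖) :=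
        (norm_inner_le_norm _ _).trans (by gcongr; exact (toEuclideanCLM (𝕜 := 𝕜) A).le_opNorm v)
    _ = ‖A‖ := by simp [v]

lemma IsHermitian.trace_cfc {𝕜 : Type*} [RCLike 𝕜] {A : Matrix n n 𝕜} (hA : A.IsHermitian)
    (f : ℝ → ℝ) : (hA.cfc f).trace = ∑ i, (f (hA.eigenvalues i) : 𝕜) := by
  rw [IsHermitian.cfc, Unitary.conjStarAlgAut_apply, trace_mul_cycle, Unitary.coe_star_mul_self,
    one_mul, trace_diagonal]
  rfl

lemma IsHermitian.traceNorm_eq_sum_abs_eigenvalues {A : Matrix n n ℂ} (hA : A.IsHermitian) :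
    traceNorm A = ∑ i, |hA.eigenvalues i| := by
  have hAA := (posSemidef_conjTranspose_mul_self A).1
  have hsqrt : hAA.cfc Real.sqrt = hA.cfc (|·|) := by
    rw [← hAA.cfc_eq, ← hA.cfc_eq, hA.eq, ← sq, ← cfc_comp_pow Real.sqrt 2 A]
    simp only [Real.sqrt_sq_eq_abs]
  change (hAA.cfc Real.sqrt).trace.re = _
  rw [hsqrt, hA.trace_cfc, Complex.re_sum]
  simp

lemma IsHermitian.l2_opNorm_eq {𝕜 : Type*} [RCLike 𝕜] {A : Matrix n n 𝕜} (hA : A.IsHermitian) :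
    ‖A‖ = ‖hA.eigenvalues‖ := by
  conv_lhs => rw [hA.spectral_theorem, Unitary.conjStarAlgAut_apply]
  rw [CStarRing.norm_coe_unitary_mul_mul_star, l2_opNorm_diagonal]
  simp [Pi.norm_def]

lemma IsHermitian.l2_opNorm_le_half_traceNorm {A : Matrix n n ℂ} (hA : A.IsHermitian)
    (htr : A.trace = 0) : ‖A‖ ≤ traceNorm A / 2 := by
  have hsum : ∑ i, hA.eigenvalues i = 0 := by
    have h := hA.trace_eq_sum_eigenvalues
    rwa [htr, ← RCLike.ofReal_sum, eq_comm, RCLike.ofReal_eq_zero] at h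
  rw [hA.l2_opNorm_eq, hA.traceNorm_eq_sum_abs_eigenvalues]
  refine (pi_norm_le_iff_of_nonneg (by positivity)).mpr fun i => ?_
  simpa using abs_le_half_sum_abs_of_sum_eq_zero _ hsum i

lemma PosSemidef.norm_trace_mul_le {𝕜 : Type*} [RCLike 𝕜] {ρ : Matrix n n 𝕜}
    (hρ : ρ.PosSemidef) (M : Matrix n n 𝕜) : ‖(M * ρ).trace‖ ≤ ‖M‖ * RCLike.re ρ.trace := by
  set U := hρ.1.eigenvectorUnitary
  set p := hρ.1.eigenvalues
  set B := star (U : Matrix n n 𝕜) * M * U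
  have htrace : (M * ρ).trace = ∑ i, B i i * p i := by
    conv_lhs => rw [hρ.1.spectral_theorem, Unitary.conjStarAlgAut_apply]
    rw [← mul_assoc, ← mul_assoc, trace_mul_cycle, ← mul_assoc]
    simp only [trace, diag_apply, mul_diagonal, Function.comp_apply]
    rfl
  have hB : ‖B‖ = ‖M‖ := by
    have h := CStarRing.norm_coe_unitary_mul_mul_star (star U) M
    rwa [Unitary.coe_star, star_star] at h
  have hre : RCLike.re ρ.trace = ∑ i, p i := by
    simp [hρ.1.trace_eq_sum_eigenvalues, p]
  calc ‖(M * ρ).trace‖ ≤ ∑ i, ‖B i i‖ * p i := by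
        rw [htrace]
        refine (norm_sum_le _ _).trans_eq (Finset.sum_congr rfl fun i _ => ?_)
        rw [norm_mul, RCLike.norm_ofReal, abs_of_nonneg (hρ.eigenvalues_nonneg i)]
    _ ≤ ∑ i, ‖M‖ * p i := by
        gcongr with i
        · exact hρ.eigenvalues_nonneg i
        · exact hB ▸ norm_diag_le_l2_opNorm B i
    _ = ‖M‖ * RCLike.re ρ.trace := by rw [hre, Finset.mul_sum]

def kroneckerOneStarAlgHom (m e : Type*) [Fintype m] [DecidableEq m] [Fintype e]
    [DecidableEq e] : Matrix m m ℂ →⋆ₐ[ℂ] Matrix (m × e) (m × e) ℂ where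
  toFun A := A ⊗ₖ (1 : Matrix e e ℂ)
  map_one' := one_kronecker_one
  map_mul' A B := by rw [← mul_kronecker_mul, one_mul]
  map_zero' := zero_kronecker _
  map_add' A B := add_kronecker A B _
  commutes' c := by simp [Algebra.algebraMap_eq_smul_one, smul_kronecker]
  map_star' A := by simp [star_eq_conjTranspose, conjTranspose_kronecker]

lemma l2_opNorm_kronecker_one_le {m e : Type*} [Fintype m] [DecidableEq m] [Fintype e]
    [DecidableEq e] (A : Matrix m m ℂ) : ‖A ⊗ₖ (1 : Matrix e e ℂ)‖ ≤ ‖A‖ :=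
  NonUnitalStarAlgHom.norm_apply_le (kroneckerOneStarAlgHom m e) A

end Matrix

section Commutator

variable {n : Type*} [Fintype n]

lemma mcomm_add_smul_one_left [DecidableEq n] (A B : Matrix n n ℂ) (c : ℂ) :
    mcomm (A + c • 1) B = mcomm A B := by
  simp only [mcomm, add_mul, mul_add, smul_mul_assoc, mul_smul_comm, one_mul, mul_one]
  abel

lemma trace_mul_mcomm (H A B : Matrix n n ℂ) :
    (H * mcomm A B).trace = (mcomm H A * B).trace := by
  simp only [mcomm, mul_sub, sub_mul, trace_sub, mul_assoc]
  rw [← mul_assoc H B A, trace_mul_comm (H * B) A]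

lemma l2_opNorm_mcomm_le [DecidableEq n] (A B : Matrix n n ℂ) : ‖mcomm A B‖ ≤ 2 * ‖A‖ * ‖B‖ :=
  calc ‖A * B - B * A‖ ≤ ‖A‖ * ‖B‖ + ‖B‖ * ‖A‖ :=
        (norm_sub_le _ _).trans (add_le_add (norm_mul_le _ _) (norm_mul_le _ _))
    _ = 2 * ‖A‖ * ‖B‖ := by ring

end Commutator

section PartialTrace

variable {m e : Type*} [Fintype e]

lemma trace_ptrace2 [Fintype m] (ρ : Matrix (m × e) (m × e) ℂ) : (ptrace2 ρ).trace = ρ.trace := by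
  simp [trace, ptrace2, Fintype.sum_prod_type]

lemma Matrix.IsHermitian.ptrace2 {ρ : Matrix (m × e) (m × e) ℂ} (hρ : ρ.IsHermitian) :
    (ptrace2 ρ).IsHermitian := by
  ext i j
  simp only [conjTranspose_apply, _root_.ptrace2, of_apply, star_sum]
  exact Finset.sum_congr rfl fun k _ => hρ.apply _ _

end PartialTrace

lemma trace_sub_inv_card_smul_one {n : Type*} [Fintype n] [DecidableEq n] {σ : Matrix n n ℂ}
    (hσ : σ.trace = 1) : (σ - (Fintype.card n : ℂ)⁻¹ • (1 : Matrix n n ℂ)).trace = 0 := by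
  have : Nonempty n := by
    by_contra h
    simp [not_nonempty_iff.mp h, trace] at hσ
  simp [trace_sub, hσ]

theorem close_to_mixed_implies_low_purity_rate_general {dS dE : ℕ}
    (ρSE : Matrix (Fin dS × Fin dE) (Fin dS × Fin dE) ℂ)
    (hρ : ρSE.PosSemidef) (htr : ρSE.trace = 1) (χ : ℝ)
    (hχ : χ = traceNorm (ptrace2 ρSE - (dS : ℂ)⁻¹ • (1 : Matrix (Fin dS) (Fin dS) ℂ))) :
    ∀ H : Matrix (Fin dS × Fin dE) (Fin dS × Fin dE) ℂ, H.IsHermitian →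
      ‖(Matrix.trace (H *
          mcomm (ptrace2 ρSE ⊗ₖ (1 : Matrix (Fin dE) (Fin dE) ℂ)) ρSE))‖ ≤
        opNorm H * χ := by
  intro H _
  set Δ := ptrace2 ρSE - (dS : ℂ)⁻¹ • (1 : Matrix (Fin dS) (Fin dS) ℂ)
  have hΔ : Δ.IsHermitian :=
    hρ.1.ptrace2.sub (isHermitian_one.smul (IsSelfAdjoint.natCast dS).inv₀)
  have hΔtr : Δ.trace = 0 := by
    simpa only [Fintype.card_fin] using
      trace_sub_inv_card_smul_one ((trace_ptrace2 ρSE).trans htr)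
  have hΔnorm : ‖Δ ⊗ₖ (1 : Matrix (Fin dE) (Fin dE) ℂ)‖ ≤ χ / 2 :=
    hχ ▸ (l2_opNorm_kronecker_one_le Δ).trans (hΔ.l2_opNorm_le_half_traceNorm hΔtr)
  have hshift : ptrace2 ρSE ⊗ₖ (1 : Matrix (Fin dE) (Fin dE) ℂ) =
      Δ ⊗ₖ (1 : Matrix (Fin dE) (Fin dE) ℂ) + (dS : ℂ)⁻¹ • 1 := by
    conv_lhs => rw [← sub_add_cancel (ptrace2 ρSE) ((dS : ℂ)⁻¹ • 1)]
    rw [add_kronecker, smul_kronecker, one_kronecker_one]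
  rw [hshift, mcomm_add_smul_one_left, trace_mul_mcomm, opNorm_eq_l2_opNorm]
  calc _ ≤ ‖mcomm H (Δ ⊗ₖ (1 : Matrix (Fin dE) (Fin dE) ℂ))‖ * ρSE.trace.re :=
        hρ.norm_trace_mul_le _
    _ ≤ 2 * ‖H‖ * (χ / 2) * 1 := by
        rw [htr, Complex.one_re]
        gcongr
        exact (l2_opNorm_mcomm_le _ _).trans (by gcongr)
    _ = ‖H‖ * χ := by ring

/-- **Lemma 3.** If the reduced state of a density matrix `ρSE` is
`χ`-close in trace norm to the fully mixed state with `χ ≤ 1/d_S` and `d_S ≥ 2`, then the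
purity rate is at most `‖H‖_∞·χ` for every interaction Hamiltonian `H`. -/
theorem close_to_mixed_implies_low_purity_rate {dS dE : ℕ} (hdS : 2 ≤ dS)
    (ρSE : Matrix (Fin dS × Fin dE) (Fin dS × Fin dE) ℂ)
    (hρ : ρSE.PosSemidef) (htr : ρSE.trace = 1) (χ : ℝ)
    (hχ : χ = traceNorm (ptrace2 ρSE - (dS : ℂ)⁻¹ • (1 : Matrix (Fin dS) (Fin dS) ℂ)))
    (hsmall : χ ≤ 1 / (dS : ℝ)) :
    ∀ H : Matrix (Fin dS × Fin dE) (Fin dS × Fin dE) ℂ, H.IsHermitian →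
      ‖(Matrix.trace (H *
          mcomm (ptrace2 ρSE ⊗ₖ (1 : Matrix (Fin dE) (Fin dE) ℂ)) ρSE))‖ ≤
        opNorm H * χ :=
  close_to_mixed_implies_low_purity_rate_general ρSE hρ htr χ hχ
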